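/- A sequence α : ℕ → ℤ is a stabilizer (i.e., for every periodic function u : ℤ → ℂ the sequence k ↦ u(α_k) is eventually constant) if and only if α represents a polyadic number, i.e., α ≡ Sα where S is the shift (Sα)_k = α_{k+1} and ≡ is the congruence in the ring of integer sequences. -/

import Mathlib

/-!
A sequence on `ℕ` is eventually constant iff it eventually agrees with its shift, so `α` is a
stabilizer iff `u (α k) = u (α (k + 1))` for almost all `k` and every periodic `u`. If
`n ∣ α k - α (k + 1)` eventually, this holds for any `u` of period `n`; conversely, testing with
the residue map `x ↦ x % n`, which has period `n`, recovers the divisibility.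
-/

/-- A sequence `α : ℕ → ℤ` is a stabilizer: for every periodic function
`u : ℤ → ℂ` the sequence `k ↦ u (α k)` is eventually constant. -/
def IsStabilizer (α : ℕ → ℤ) : Prop :=
  ∀ u : ℤ → ℂ, (∃ p : ℤ, 0 < p ∧ Function.Periodic u p) →
    ∃ v : ℂ, ∀ᶠ k in Filter.cofinite, u (α k) = v

/-- `α ≡ Sα`: for every positive integer `n`, `n ∣ α k − α (k+1)` for all but
finitely many `k`; i.e. `α` represents a polyadic number. -/
def RepsPolyadic (α : ℕ → ℤ) : Prop :=
  ∀ n : ℤ, 0 < n → ∀ᶠ k in Filter.cofinite, n ∣ α k - α (k + 1)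

open Filter

theorem exists_eventually_eq_iff_eventually_eq_succ {β : Type*} (f : ℕ → β) :
    (∃ v, ∀ᶠ k in cofinite, f k = v) ↔ ∀ᶠ k in cofinite, f k = f (k + 1) := by
  simp only [Nat.cofinite_eq_atTop, eventually_atTop]
  constructor
  · rintro ⟨v, N, hN⟩
    exact ⟨N, fun k hk => (hN k hk).trans (hN (k + 1) (by omega)).symm⟩
  · rintro ⟨N, hN⟩
    refine ⟨f N, N, fun k hk => ?_⟩
    induction k, hk using Nat.le_induction with
    | base => rfl
    | succ k hk ih => exact (hN k hk).symm.trans ih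

theorem Function.Periodic.eq_of_dvd_sub {β : Type*} {u : ℤ → β} {p : ℤ}
    (hu : Function.Periodic u p) {a b : ℤ} (h : p ∣ a - b) : u a = u b := by
  obtain ⟨m, hm⟩ := h
  rw [show a = b + m * p by linarith]
  simpa using hu.int_mul m b

theorem periodic_intCast_emod (n : ℤ) :
    Function.Periodic (fun x : ℤ => ((x % n : ℤ) : ℂ)) n := by
  intro x
  simp only [Int.add_emod_right]

theorem isStabilizer_iff_eventually_eq_succ (α : ℕ → ℤ) :
    IsStabilizer α ↔ ∀ u : ℤ → ℂ, (∃ p : ℤ, 0 < p ∧ Function.Periodic u p) →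
      ∀ᶠ k in cofinite, u (α k) = u (α (k + 1)) :=
  forall₂_congr fun u _ => exists_eventually_eq_iff_eventually_eq_succ (u ∘ α)

/-- A sequence of integers is a stabilizer if and only if it represents a
polyadic number. -/
theorem isStabilizer_iff_repsPolyadic (α : ℕ → ℤ) :
    IsStabilizer α ↔ RepsPolyadic α := by
  rw [isStabilizer_iff_eventually_eq_succ]
  constructor
  · intro hS n hn
    filter_upwards [hS _ ⟨n, hn, periodic_intCast_emod n⟩] with k hk
    exact Int.ModEq.dvd (Int.cast_injective hk).symm
  · rintro hP u ⟨p, hp, hu⟩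
    filter_upwards [hP p hp] with k hk
    exact hu.eq_of_dvd_sub hk
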